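/- Let G be an abelian group, φ : G → G a group endomorphism, H a φ-inert subgroup of G, and k a positive integer. Then, setting H' := T_k(φ,H), one has ent̃(φ,H) = ent̃(φ,H'), i.e. lim_{n→∞} log|T_n(φ,H)/H|/n = lim_{n→∞} log|T_n(φ,H')/H'|/n. -/

import Mathlib

open Filter Topology ENNReal

variable {G : Type*}

/-- The `n`-th partial `φ`-trajectory of a subgroup `H`:
`T_n(φ,H) = H + φ(H) + ... + φ^{n-1}(H)`. -/
noncomputable def traj [AddCommGroup G] (φ : AddMonoid.End G) (H : AddSubgroup G) (n : ℕ) :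
    AddSubgroup G :=
  ⨆ i ∈ Finset.range n, H.map (φ ^ i)

/-- `H` is `φ`-inert if `(H + φ(H))/H` is finite. -/
def IsInert [AddCommGroup G] (φ : AddMonoid.End G) (H : AddSubgroup G) : Prop :=
  Finite (↥(H ⊔ H.map φ) ⧸ H.addSubgroupOf (H ⊔ H.map φ))

/-- The sequence `n ↦ log |T_n(φ,H)/H| / n`. -/
noncomputable def entFun [AddCommGroup G] (φ : AddMonoid.End G) (H : AddSubgroup G) (n : ℕ) : ℝ :=
  Real.log (Nat.card (↥(traj φ H n) ⧸ H.addSubgroupOf (traj φ H n))) / n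

/-- The intrinsic entropy of `φ` with respect to `H`: the limit of `entFun φ H`. -/
noncomputable def entWrt [AddCommGroup G] (φ : AddMonoid.End G) (H : AddSubgroup G) : ℝ :=
  limUnder atTop (entFun φ H)

/-- The intrinsic algebraic entropy of `φ`. -/
noncomputable def intrinsicEnt [AddCommGroup G] (φ : AddMonoid.End G) : ℝ≥0∞ :=
  ⨆ (H : AddSubgroup G) (_ : IsInert φ H), ENNReal.ofReal (entWrt φ H)

/-- The `φ`-trajectory of `H`: `T(φ,H) = ⋃_{n ≥ 1} T_n(φ,H)`. -/
noncomputable def trajAll [AddCommGroup G] (φ : AddMonoid.End G) (H : AddSubgroup G) :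
    AddSubgroup G :=
  ⨆ n : ℕ, traj φ H (n + 1)

section AuxLemmas
variable [AddCommGroup G] (φ : AddMonoid.End G) (H : AddSubgroup G)

lemma traj_zero : traj φ H 0 = ⊥ := by simp [traj]

lemma traj_succ (n : ℕ) : traj φ H (n + 1) = traj φ H n ⊔ H.map (φ ^ n) := by
  rw [traj, traj, Finset.range_add_one, Finset.iSup_insert, sup_comm]

lemma traj_one : traj φ H 1 = H := by
  rw [traj_succ, traj_zero, bot_sup_eq, pow_zero]
  exact H.map_id

lemma map_pow_succ (n : ℕ) : H.map (φ ^ (n+1)) = (H.map (φ ^ n)).map φ := by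
  rw [pow_succ']
  exact (AddSubgroup.map_map (f := (φ ^ n : G →+ G)) (g := (φ : G →+ G)) H).symm

lemma traj_mono : Monotone (traj φ H) := by
  apply monotone_nat_of_le_succ
  intro n
  rw [traj_succ]
  exact le_sup_left

lemma le_traj (n : ℕ) : H ≤ traj φ H (n+1) := by
  calc H = traj φ H 1 := (traj_one φ H).symm
  _ ≤ traj φ H (n+1) := traj_mono φ H (by omega)

lemma traj_succ' (n : ℕ) : traj φ H (n + 1) = H ⊔ (traj φ H n).map φ := by
  induction n with
  | zero => simp [traj_one, traj_zero]; rw [AddSubgroup.map_bot (f := (φ : G →+ G))]; exact bot_le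
  | succ n ih =>
    rw [traj_succ φ H (n+1), ih, map_pow_succ, sup_assoc, ← AddSubgroup.map_sup (f := (φ : G →+ G)),
      ← traj_succ, ih]

lemma traj_sup_map (n : ℕ) :
    traj φ H (n + 2) = traj φ H (n+1) ⊔ (traj φ H (n+1)).map φ := by
  apply le_antisymm
  · rw [traj_succ' φ H (n+1)]
    exact sup_le (le_sup_of_le_left (le_traj φ H n)) le_sup_right
  · exact sup_le (traj_mono φ H (by omega))
      (by rw [traj_succ' φ H (n+1)]; exact le_sup_right)

lemma traj_traj (k : ℕ) (hk : 0 < k) (n : ℕ) :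
    traj φ (traj φ H k) (n + 1) = traj φ H (k + n) := by
  induction n with
  | zero => rw [traj_one, Nat.add_zero]
  | succ n ih =>
    rw [traj_succ' φ _ (n+1), ih]
    obtain ⟨m, rfl⟩ : ∃ m, k = m + 1 := ⟨k - 1, by omega⟩
    have h : m + 1 + (n + 1) = (m + 1 + n) + 1 := by omega
    rw [h, traj_succ' φ H (m + 1 + n)]
    apply le_antisymm
    · refine sup_le ?_ le_sup_right
      calc traj φ H (m+1) ≤ traj φ H (m+1+n+1) := traj_mono φ H (by omega)
      _ = _ := traj_succ' φ H (m+1+n)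
    · exact sup_le (le_trans (le_traj φ H m) le_sup_left) le_sup_right

lemma relindex_traj_dvd (n : ℕ) :
    (traj φ H (n+2)).relIndex (traj φ H (n+3)) ∣ (traj φ H (n+1)).relIndex (traj φ H (n+2)) := by
  have hA : traj φ H (n+2) = traj φ H (n+1) ⊔ (traj φ H (n+1)).map φ := traj_sup_map φ H n
  have hB : traj φ H (n+3) = traj φ H (n+2) ⊔ (traj φ H (n+2)).map φ := traj_sup_map φ H (n+1)
  rw [hB, AddSubgroup.relIndex_sup_left, ← AddSubgroup.relIndex_comap (f := (φ : G →+ G))]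
  exact AddSubgroup.relIndex_dvd_of_le_left _
    ((AddSubgroup.map_le_iff_le_comap (f := (φ : G →+ G))).mp (by rw [hA]; exact le_sup_right))

lemma entFun_eq_relindex (n : ℕ) :
    entFun φ H n = Real.log (H.relIndex (traj φ H n)) / n := rfl

lemma tendsto_affine {f : ℕ → ℝ} {C L : ℝ} {M : ℕ}
    (h : ∀ n ≥ M, f n = C / n + L) : Tendsto f atTop (𝓝 L) := by
  have h2 : Tendsto (fun n : ℕ => C / n + L) atTop (𝓝 (0 + L)) :=
    (tendsto_const_div_atTop_nhds_zero_nat C).add tendsto_const_nhds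
  rw [zero_add] at h2
  exact h2.congr' (eventually_atTop.2 ⟨M, fun n hn => (h n hn).symm⟩)

end AuxLemmas


/-- If `H` is `φ`-inert and `H' = T_k(φ,H)` for `k ≥ 1`, then `ent̃(φ,H) = ent̃(φ,H')`:
the sequences `log|T_n(φ,H)/H|/n` and `log|T_n(φ,H')/H'|/n` converge to the same limit. -/
theorem entWrt_traj_eq [AddCommGroup G] (φ : AddMonoid.End G) (H : AddSubgroup G)
    (hH : IsInert φ H) (k : ℕ) (hk : 0 < k) :
    ∃ L : ℝ, Tendsto (entFun φ H) atTop (𝓝 L) ∧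
      Tendsto (entFun φ (traj φ H k)) atTop (𝓝 L) := by
  set c : ℕ → ℕ := fun n => (traj φ H (n+1)).relIndex (traj φ H (n+2)) with hc
  have hdvd : ∀ n, c (n+1) ∣ c n := fun n => relindex_traj_dvd φ H n
  have hc0 : c 0 ≠ 0 := by
    have t1 : traj φ H (0+1) = H := by rw [show (0:ℕ)+1 = 1 by omega, traj_one]
    have h2 : traj φ H (0+2) = H ⊔ H.map φ := by rw [traj_sup_map φ H 0, t1]
    have : Finite (↥(H ⊔ H.map φ) ⧸ H.addSubgroupOf (H ⊔ H.map φ)) := hH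
    have e : c 0 = Nat.card (↥(H ⊔ H.map φ) ⧸ H.addSubgroupOf (H ⊔ H.map φ)) := by
      simp only [hc, t1, h2]
      rfl
    rw [e]
    exact Nat.card_pos.ne'
  have hcne : ∀ n, c n ≠ 0 := by
    intro n
    induction n with
    | zero => exact hc0
    | succ n ih => exact fun h => ih (by
        have := hdvd n
        rw [h] at this
        exact Nat.eq_zero_of_zero_dvd this ▸ rfl)
  have hanti : ∀ n, c (n+1) ≤ c n := fun n =>
    Nat.le_of_dvd (Nat.pos_of_ne_zero (hcne n)) (hdvd n)
  have hmono : Antitone c := antitone_nat_of_succ_le hanti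
  -- eventually constant
  obtain ⟨N, hN⟩ : ∃ N, c N = sInf (Set.range c) := Nat.sInf_mem (Set.range_nonempty c)
  have hconst : ∀ m, N ≤ m → c m = c N := fun m hm =>
    le_antisymm (hmono hm) (le_trans (le_of_eq hN) (Nat.sInf_le (Set.mem_range_self m)))
  set α : ℕ := c N with hα
  set L : ℝ := Real.log α with hL
  set a : ℕ → ℕ := fun n => H.relIndex (traj φ H (n+1)) with ha
  have ha_succ : ∀ n, a (n+1) = a n * c n := by
    intro n
    exact (AddSubgroup.relIndex_mul_relIndex _ _ _ (le_traj φ H n)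
      (traj_mono φ H (by omega))).symm
  have ha0 : a 0 = 1 := by
    have t1 : traj φ H (0+1) = H := by rw [show (0:ℕ)+1 = 1 by omega, traj_one]
    simp only [ha, t1]
    exact AddSubgroup.relIndex_self H
  have hane : ∀ n, a n ≠ 0 := by
    intro n
    induction n with
    | zero => simp [ha0]
    | succ n ih => rw [ha_succ]; exact Nat.mul_ne_zero ih (hcne n)
  -- geometric formula
  have key : ∀ j, a (N + 1 + j) = a (N + 1) * α ^ j := by
    intro j
    induction j with
    | zero => simp
    | succ j ih =>
      have : N + 1 + (j + 1) = (N + 1 + j) + 1 := by omega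
      rw [this, ha_succ, ih, hconst (N + 1 + j) (by omega), pow_succ, mul_assoc]
  have hαne : (α : ℝ) ≠ 0 := Nat.cast_ne_zero.mpr (hcne N)
  have keylog : ∀ j, Real.log (a (N + 1 + j)) = Real.log (a (N + 1)) + j * L := by
    intro j
    rw [key j, Nat.cast_mul, Nat.cast_pow,
      Real.log_mul (Nat.cast_ne_zero.mpr (hane (N+1))) (pow_ne_zero j hαne),
      Real.log_pow]
  refine ⟨L, ?_, ?_⟩
  · -- first sequence
    set C : ℝ := Real.log (a (N + 1)) - ((N : ℝ) + 2) * L with hC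
    apply tendsto_affine (M := N + 2) (C := C)
    intro n hn
    obtain ⟨j, rfl⟩ : ∃ j, n = N + 2 + j := ⟨n - (N + 2), by omega⟩
    have hidx : N + 2 + j = (N + 1 + j) + 1 := by omega
    rw [entFun_eq_relindex, hidx]
    show Real.log (a (N + 1 + j)) / _ = _
    rw [keylog j]
    have hnz : ((N:ℝ) + 1 + j + 1) ≠ 0 := by positivity
    field_simp
    push_cast; ring
  · -- second sequence
    obtain ⟨K0, rfl⟩ : ∃ K0, k = K0 + 1 := ⟨k - 1, by omega⟩
    set b : ℕ → ℕ := fun m => (traj φ H (K0+1)).relIndex (traj φ H (K0 + 1 + m)) with hb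
    have hab : ∀ m, a K0 * b m = a (K0 + m) := by
      intro m
      simp only [ha, hb]
      have h1 : K0 + m + 1 = K0 + 1 + m := by omega
      rw [h1]
      exact AddSubgroup.relIndex_mul_relIndex _ _ _ (le_traj φ H K0)
        (traj_mono φ H (by omega))
    have hbne : ∀ m, b m ≠ 0 := by
      intro m hm
      exact hane (K0 + m) (by rw [← hab m, hm, Nat.mul_zero])
    have hblog : ∀ m, Real.log (b m) = Real.log (a (K0 + m)) - Real.log (a K0) := by
      intro m
      rw [← hab m, Nat.cast_mul,
        Real.log_mul (Nat.cast_ne_zero.mpr (hane K0)) (Nat.cast_ne_zero.mpr (hbne m))]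
      ring
    set C' : ℝ := Real.log (a (N + 1)) - Real.log (a K0) + ((K0 : ℝ) - N - 2) * L with hC'
    apply tendsto_affine (M := N + 2) (C := C')
    intro n hn
    obtain ⟨m, rfl⟩ : ∃ m, n = m + 1 := ⟨n - 1, by omega⟩
    have hT : traj φ (traj φ H (K0+1)) (m + 1) = traj φ H (K0 + 1 + m) := traj_traj φ H _ hk m
    rw [entFun_eq_relindex, hT]
    show Real.log (b m) / _ = _
    have hjj : ∃ j, K0 + m = N + 1 + j := ⟨K0 + m - N - 1, by omega⟩
    obtain ⟨j, hj⟩ := hjj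
    rw [hblog m, hj, keylog j]
    have hnz : ((m:ℝ) + 1) ≠ 0 := by positivity
    have hjcast : (j : ℝ) = (K0 : ℝ) + m - N - 1 := by
      have : (K0 : ℝ) + m = (N : ℝ) + 1 + j := by exact_mod_cast congrArg (Nat.cast : ℕ → ℝ) hj
      linarith
    rw [hjcast]
    field_simp
    push_cast; ring
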